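/- Polynomial length bound for solutions of linear discrete ODEs: suppose f : ℕ → ℤ satisfies f(x+1) = f(x) + A(x)·f(x) + B(x) where there is a polynomial p with log₂(1 + |A(x)|) ≤ p(x) and log₂(1 + |B(x)|) ≤ p(x) for all x. Then there is a polynomial q such that log₂(1 + |f(x)|) ≤ q(x) for all x; in particular one can take q(x) = log₂(1+|f(0)|) + (x+1)·(p(x) + 1) when p is monotone. -/
import Mathlib

open Polynomial

lemma core_sum_bound (f A B : ℕ → ℤ)
    (hrec : ∀ x, f (x+1) = f x + A x * f x + B x)
    (g : ℕ → ℝ)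
    (hA : ∀ x : ℕ, Real.logb 2 (1 + |(A x : ℝ)|) ≤ g x)
    (hB : ∀ x : ℕ, Real.logb 2 (1 + |(B x : ℝ)|) ≤ g x) :
    ∀ x : ℕ, Real.logb 2 (1 + |(f x : ℝ)|)
      ≤ Real.logb 2 (1 + |(f 0 : ℝ)|) + ∑ i ∈ Finset.range x, (g i + 1) := by
  intro x
  induction x with
  | zero => simp
  | succ n ih =>
    have habs : |(f (n+1) : ℝ)| ≤ |(f n : ℝ)| + |(A n : ℝ)| * |(f n : ℝ)| + |(B n : ℝ)| := by
      have := hrec n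
      have h : (f (n+1) : ℝ) = (f n : ℝ) + (A n : ℝ) * (f n : ℝ) + (B n : ℝ) := by
        exact_mod_cast congrArg (fun z : ℤ => (z : ℝ)) this
      rw [h, ← abs_mul]
      exact (abs_add_le _ _).trans (by gcongr; exact abs_add_le _ _)
    have h1 : (1:ℝ) + |(f (n+1) : ℝ)| ≤ (1 + |(f n : ℝ)|) * (1 + |(A n : ℝ)| + |(B n : ℝ)|) := by
      nlinarith [abs_nonneg ((f n : ℝ)), abs_nonneg ((A n : ℝ)), abs_nonneg ((B n : ℝ))]
    have hApos : (0:ℝ) < 1 + |(A n : ℝ)| := by positivity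
    have hBpos : (0:ℝ) < 1 + |(B n : ℝ)| := by positivity
    have hfpos : (0:ℝ) < 1 + |(f n : ℝ)| := by positivity
    have hAle : (1:ℝ) + |(A n : ℝ)| ≤ (2:ℝ) ^ (g n) :=
      ((Real.logb_le_iff_le_rpow one_lt_two hApos).mp (hA n))
    have hBle : (1:ℝ) + |(B n : ℝ)| ≤ (2:ℝ) ^ (g n) :=
      ((Real.logb_le_iff_le_rpow one_lt_two hBpos).mp (hB n))
    have hprod : (1:ℝ) + |(A n : ℝ)| + |(B n : ℝ)| ≤ (2:ℝ) ^ (g n + 1) := by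
      have : ((2:ℝ) ^ (g n + 1)) = (2:ℝ) ^ (g n) * 2 := by
        rw [Real.rpow_add (by norm_num), Real.rpow_one]
      rw [this]
      nlinarith
    have hsum : Real.logb 2 (1 + |(f (n+1) : ℝ)|)
        ≤ Real.logb 2 (1 + |(f n : ℝ)|) + (g n + 1) := by
      calc Real.logb 2 (1 + |(f (n+1) : ℝ)|)
          ≤ Real.logb 2 ((1 + |(f n : ℝ)|) * (1 + |(A n : ℝ)| + |(B n : ℝ)|)) := by
            exact Real.logb_le_logb_of_le (by norm_num) (by positivity) h1
        _ = Real.logb 2 (1 + |(f n : ℝ)|) + Real.logb 2 (1 + |(A n : ℝ)| + |(B n : ℝ)|) := by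
            rw [Real.logb_mul (ne_of_gt hfpos) (by positivity)]
        _ ≤ Real.logb 2 (1 + |(f n : ℝ)|) + (g n + 1) := by
            gcongr
            calc Real.logb 2 (1 + |(A n : ℝ)| + |(B n : ℝ)|)
                ≤ Real.logb 2 ((2:ℝ) ^ (g n + 1)) := by
                  exact Real.logb_le_logb_of_le (by norm_num) (by positivity) hprod
              _ = g n + 1 := Real.logb_rpow (by norm_num) (by norm_num)
    rw [Finset.sum_range_succ]
    linarith

lemma sum_step_bound (g : ℕ → ℝ) (hg : ∀ i j : ℕ, i ≤ j → g i ≤ g j)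
    (hnn : ∀ i, 0 ≤ g i) (x : ℕ) :
    ∑ i ∈ Finset.range x, (g i + 1) ≤ ((x:ℝ)+1) * (g x + 1) := by
  calc ∑ i ∈ Finset.range x, (g i + 1)
      ≤ ∑ _i ∈ Finset.range x, (g x + 1) := by
        apply Finset.sum_le_sum
        intro i hi
        have := hg i x (le_of_lt (Finset.mem_range.mp hi))
        linarith
    _ = (x:ℝ) * (g x + 1) := by
        rw [Finset.sum_const, Finset.card_range, nsmul_eq_mul]
    _ ≤ ((x:ℝ)+1) * (g x + 1) := by nlinarith [hnn x]

/-- Polynomial length bound for solutions of linear discrete ODEs. -/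
theorem linear_ODE_polynomial_length_bound (f A B : ℕ → ℤ)
    (hrec : ∀ x, f (x+1) = f x + A x * f x + B x)
    (p : Polynomial ℝ)
    (hpA : ∀ x : ℕ, Real.logb 2 (1 + |(A x : ℝ)|) ≤ p.eval (x : ℝ))
    (hpB : ∀ x : ℕ, Real.logb 2 (1 + |(B x : ℝ)|) ≤ p.eval (x : ℝ)) :
    (∃ q : Polynomial ℝ, ∀ x : ℕ, Real.logb 2 (1 + |(f x : ℝ)|) ≤ q.eval (x : ℝ)) ∧
    (Monotone (fun x : ℕ => p.eval (x : ℝ)) →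
      ∀ x : ℕ, Real.logb 2 (1 + |(f x : ℝ)|)
        ≤ Real.logb 2 (1 + |(f 0 : ℝ)|) + ((x : ℝ) + 1) * (p.eval (x : ℝ) + 1)) := by
  have hpnn : ∀ x : ℕ, 0 ≤ p.eval (x : ℝ) := fun x =>
    le_trans (Real.logb_nonneg one_lt_two (by linarith [abs_nonneg ((A x : ℝ))])) (hpA x)
  constructor
  · -- construct the monotone majorant polynomial
    set q0 : Polynomial ℝ :=
      ∑ i ∈ Finset.range (p.natDegree + 1), Polynomial.C |p.coeff i| * Polynomial.X ^ i with hq0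
    have hq0eval : ∀ t : ℝ, q0.eval t = ∑ i ∈ Finset.range (p.natDegree + 1), |p.coeff i| * t ^ i := by
      intro t
      simp [hq0, Polynomial.eval_finset_sum]
    have hle : ∀ t : ℝ, 0 ≤ t → p.eval t ≤ q0.eval t := by
      intro t ht
      rw [hq0eval, Polynomial.eval_eq_sum_range]
      apply Finset.sum_le_sum
      intro i _
      exact mul_le_mul_of_nonneg_right (le_abs_self _) (pow_nonneg ht i)
    have hmono : ∀ s t : ℝ, 0 ≤ s → s ≤ t → q0.eval s ≤ q0.eval t := by
      intro s t hs hst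
      rw [hq0eval, hq0eval]
      apply Finset.sum_le_sum
      intro i _
      exact mul_le_mul_of_nonneg_left (pow_le_pow_left₀ hs hst i) (abs_nonneg _)
    have hgA : ∀ x : ℕ, Real.logb 2 (1 + |(A x : ℝ)|) ≤ q0.eval (x : ℝ) :=
      fun x => (hpA x).trans (hle _ (Nat.cast_nonneg x))
    have hgB : ∀ x : ℕ, Real.logb 2 (1 + |(B x : ℝ)|) ≤ q0.eval (x : ℝ) :=
      fun x => (hpB x).trans (hle _ (Nat.cast_nonneg x))
    have hnn : ∀ i : ℕ, 0 ≤ q0.eval (i : ℝ) := fun i => le_trans (hpnn i) (hle _ (Nat.cast_nonneg i))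
    refine ⟨Polynomial.C (Real.logb 2 (1 + |(f 0 : ℝ)|)) + (Polynomial.X + 1) * (q0 + 1), fun x => ?_⟩
    have h1 := core_sum_bound f A B hrec (fun x => q0.eval (x : ℝ)) hgA hgB x
    have h2 := sum_step_bound (fun x => q0.eval (x : ℝ))
      (fun i j hij => hmono _ _ (Nat.cast_nonneg i) (by exact_mod_cast hij)) hnn x
    simp only [Polynomial.eval_add, Polynomial.eval_mul, Polynomial.eval_C, Polynomial.eval_X,
      Polynomial.eval_one]
    linarith
  · intro hmono x
    have h1 := core_sum_bound f A B hrec (fun x => p.eval (x : ℝ)) hpA hpB x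
    have h2 := sum_step_bound (fun x => p.eval (x : ℝ))
      (fun i j hij => hmono hij) hpnn x
    linarith
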